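/- arXiv:0805.1525 — 2 statements merged into one kernel-verified Lean document; each statement's English description precedes it below -/
import Mathlib

section
/- If α* = √n_1 + √n_2 ± √n_3 - √n_4 ≠ 0 for positive integers n_1, n_2, n_3, n_4, then |α*| ≥ c · max(n_1, n_2, n_3, n_4)^{-3/2} (n_1 n_2 n_3 n_4)^{-1/2} for some absolute constant c > 0. -/
set_option maxHeartbeats 1000000

-- gap lemma: if x ≠ y with x² = k, y² = l naturals, x,y ∈ [1,e], then 1 ≤ 2|x-y|e
lemma gap_bound (k l : ℕ) (x y e : ℝ) (hx2 : x^2 = k) (hy2 : y^2 = l)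
    (hx1 : 1 ≤ x) (hy1 : 1 ≤ y) (hxe : x ≤ e) (hye : y ≤ e) (hxy : x ≠ y) :
    1 ≤ (2*|x-y|)*e := by
  have hkl : k ≠ l := by
    intro h
    apply hxy
    have h2 : x^2 = y^2 := by rw [hx2, hy2, h]
    have h3 : (x-y)*(x+y) = 0 := by linear_combination h2
    rcases mul_eq_zero.mp h3 with h'|h'
    · linarith
    · linarith
  have hgapZ : (1:ℤ) ≤ |(k:ℤ) - l| := Int.one_le_abs (sub_ne_zero.mpr (by exact_mod_cast hkl))
  have hgap : (1:ℝ) ≤ |(k:ℝ) - l| := by exact_mod_cast hgapZ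
  have hsq : |x^2 - y^2| = |x - y| * (x + y) := by
    rw [show x^2 - y^2 = (x-y)*(x+y) from by ring, abs_mul, abs_of_nonneg (by linarith : (0:ℝ) ≤ x+y)]
  have h1 : 1 ≤ |x - y| * (x + y) := by
    rw [← hsq, hx2, hy2]; exact hgap
  nlinarith [mul_nonneg (abs_nonneg (x - y)) (by linarith : (0:ℝ) ≤ 2*e - (x+y))]

lemma one_le_of_sq (x : ℝ) (h0 : 0 ≤ x) (h1 : 1 ≤ x^2) : 1 ≤ x := by nlinarith

lemma le_of_sq_le_sq' (x y : ℝ) (hx0 : 0 ≤ x) (hy0 : 0 ≤ y) (h : x^2 ≤ y^2) : x ≤ y := by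
  nlinarith

lemma sq_sub_le_sq (x y e : ℝ) (hx0 : 0 ≤ x) (hy0 : 0 ≤ y) (hxe : x ≤ e) (hye : y ≤ e) :
    (x - y)^2 ≤ e^2 := by
  nlinarith [mul_nonneg (by linarith : (0:ℝ) ≤ e - x + y) (by linarith : (0:ℝ) ≤ e + x - y)]

lemma sc_add_sq_le (s c d e : ℝ) (hs2 : s^2 = 1) (hsle : s ≤ 1) (hc0 : 0 ≤ c) (hd0 : 0 ≤ d)
    (hce : c ≤ e) (hde : d ≤ e) : (s*c + d)^2 ≤ 4*e^2 := by
  have h1 : (s*c + d)^2 = c^2 + d^2 + 2*(s*(c*d)) := by linear_combination (c^2)*hs2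
  have h2 : s*(c*d) ≤ c*d := by
    have := mul_le_mul_of_nonneg_right hsle (by positivity : (0:ℝ) ≤ c*d)
    linarith
  nlinarith [mul_nonneg (by linarith : (0:ℝ) ≤ e - c) (by linarith : (0:ℝ) ≤ e - d),
    mul_nonneg (by linarith : (0:ℝ) ≤ e - c + d) (by linarith : (0:ℝ) ≤ e + c - d)]

lemma master (n₁ n₂ n₃ n₄ N : ℕ)
    (h1 : 0 < n₁) (h2 : 0 < n₂) (h3 : 0 < n₃) (h4 : 0 < n₄)
    (hN1 : n₁ ≤ N) (hN2 : n₂ ≤ N) (hN3 : n₃ ≤ N) (hN4 : n₄ ≤ N)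
    (a b c d e s : ℝ)
    (ha2 : a^2 = n₁) (hb2 : b^2 = n₂) (hc2 : c^2 = n₃) (hd2 : d^2 = n₄)
    (he2 : e^2 = N)
    (ha0 : 0 ≤ a) (hb0 : 0 ≤ b) (hc0 : 0 ≤ c) (hd0 : 0 ≤ d) (he0 : 0 ≤ e)
    (hs : s = 1 ∨ s = -1)
    (hα : a + b + s*c - d ≠ 0) :
    1/384 * (1/(e^3 * (a*b*c*d))) ≤ |a + b + s*c - d| := by
  have hs2 : s^2 = 1 := by rcases hs with rfl|rfl <;> norm_num
  have hsabs : |s| = 1 := by rcases hs with rfl|rfl <;> norm_num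
  have hsle : s ≤ 1 := by rcases hs with rfl|rfl <;> norm_num
  have hsge : -1 ≤ s := by rcases hs with rfl|rfl <;> norm_num
  have hn1 : (1:ℝ) ≤ (n₁:ℝ) := by exact_mod_cast h1
  have hn2 : (1:ℝ) ≤ (n₂:ℝ) := by exact_mod_cast h2
  have hn3 : (1:ℝ) ≤ (n₃:ℝ) := by exact_mod_cast h3
  have hn4 : (1:ℝ) ≤ (n₄:ℝ) := by exact_mod_cast h4
  have hne1 : (n₁:ℝ) ≤ (N:ℝ) := by exact_mod_cast hN1
  have hne2 : (n₂:ℝ) ≤ (N:ℝ) := by exact_mod_cast hN2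
  have hne3 : (n₃:ℝ) ≤ (N:ℝ) := by exact_mod_cast hN3
  have hne4 : (n₄:ℝ) ≤ (N:ℝ) := by exact_mod_cast hN4
  have ha1 : 1 ≤ a := one_le_of_sq a ha0 (by rw [ha2]; exact hn1)
  have hb1 : 1 ≤ b := one_le_of_sq b hb0 (by rw [hb2]; exact hn2)
  have hc1 : 1 ≤ c := one_le_of_sq c hc0 (by rw [hc2]; exact hn3)
  have hd1 : 1 ≤ d := one_le_of_sq d hd0 (by rw [hd2]; exact hn4)
  have hae : a ≤ e := le_of_sq_le_sq' a e ha0 he0 (by rw [ha2, he2]; exact hne1)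
  have hbe : b ≤ e := le_of_sq_le_sq' b e hb0 he0 (by rw [hb2, he2]; exact hne2)
  have hce : c ≤ e := le_of_sq_le_sq' c e hc0 he0 (by rw [hc2, he2]; exact hne3)
  have hde : d ≤ e := le_of_sq_le_sq' d e hd0 he0 (by rw [hd2, he2]; exact hne4)
  have he1 : 1 ≤ e := le_trans ha1 hae
  have he2' : 1 ≤ e^2 := by nlinarith [he1, sq_nonneg (e-1)]
  have he3 : 1 ≤ e^3 := by nlinarith [he1, he2']
  have hR1 : (1:ℝ) ≤ a*b*c*d := by
    have h1 : 1 ≤ a*b := one_le_mul_of_one_le_of_one_le ha1 hb1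
    have h2 : 1 ≤ c*d := one_le_mul_of_one_le_of_one_le hc1 hd1
    calc (1:ℝ) = 1*1 := by norm_num
    _ ≤ (a*b)*(c*d) := by
        apply mul_le_mul h1 h2 (by norm_num) (by linarith)
    _ = a*b*c*d := by ring
  have hRpos : (0:ℝ) < a*b*c*d := by linarith
  have hX1 : 1 ≤ e^3*(a*b*c*d) := by
    calc (1:ℝ) = 1*1 := by norm_num
    _ ≤ e^3*(a*b*c*d) := mul_le_mul he3 hR1 (by norm_num) (by linarith)
  have hXpos : 0 < e^3*(a*b*c*d) := by linarith
  -- reduce goal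
  rw [div_mul_div_comm, div_le_iff₀ (by positivity)]
  rw [show (1:ℝ)*1 = 1 from by norm_num]
  -- goal : 1 ≤ |a+b+s*c-d| * (384*(e^3*(a*b*c*d)))
  have habs0 : 0 ≤ |a + b + s*c - d| := abs_nonneg _
  by_cases hβ : a + b - s*c + d = 0
  · -- α = 2a+2b
    have hαval : a + b + s*c - d = 2*a + 2*b := by linarith
    have habs : |a + b + s*c - d| = 2*a + 2*b := by
      rw [hαval]; exact abs_of_nonneg (by linarith)
    rw [habs]
    have h4 : (1:ℝ) ≤ 2*a + 2*b := by linarith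
    have h384 : (1:ℝ) ≤ 384*(e^3*(a*b*c*d)) := by linarith
    linarith [mul_nonneg (by linarith : (0:ℝ) ≤ 2*a+2*b-1) (by linarith : (0:ℝ) ≤ 384*(e^3*(a*b*c*d)) - 1)]
  by_cases hγa : a - b + (s*c + d) = 0
  · -- α = 2b - 2d
    have hαval : a + b + s*c - d = 2*(b - d) := by linarith
    have hbd : b ≠ d := by
      intro h; apply hα; rw [hαval, h]; ring
    have hgap := gap_bound n₂ n₄ b d e hb2 hd2 hb1 hd1 hbe hde hbd
    have habs : |a + b + s*c - d| = 2*|b - d| := by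
      rw [hαval, abs_mul, abs_two]
    rw [habs]
    have hbd0 : (0:ℝ) ≤ |b - d| := abs_nonneg _
    have hA : (1:ℝ) ≤ (2*|b - d|)*e := hgap
    have hB : (1:ℝ) ≤ 384*(e^2*(a*b*c*d)) := by
      have : (1:ℝ) ≤ e^2*(a*b*c*d) :=
        le_trans hR1 (le_mul_of_one_le_left (by linarith) he2')
      linarith
    linarith [mul_nonneg (by linarith : (0:ℝ) ≤ (2*|b - d|)*e - 1) (by linarith : (0:ℝ) ≤ 384*(e^2*(a*b*c*d)) - 1)]
  by_cases hγb : a - b - (s*c + d) = 0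
  · -- α = 2a - 2d
    have hαval : a + b + s*c - d = 2*(a - d) := by linarith
    have had : a ≠ d := by
      intro h; apply hα; rw [hαval, h]; ring
    have hgap := gap_bound n₁ n₄ a d e ha2 hd2 ha1 hd1 hae hde had
    have habs : |a + b + s*c - d| = 2*|a - d| := by
      rw [hαval, abs_mul, abs_two]
    rw [habs]
    have had0 : (0:ℝ) ≤ |a - d| := abs_nonneg _
    have hA : (1:ℝ) ≤ (2*|a - d|)*e := hgap
    have hB : (1:ℝ) ≤ 384*(e^2*(a*b*c*d)) := by
      have : (1:ℝ) ≤ e^2*(a*b*c*d) :=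
        le_trans hR1 (le_mul_of_one_le_left (by linarith) he2')
      linarith
    linarith [mul_nonneg (by linarith : (0:ℝ) ≤ (2*|a - d|)*e - 1) (by linarith : (0:ℝ) ≤ 384*(e^2*(a*b*c*d)) - 1)]
  · -- main case: multiply by conjugates
    have hγ0 : (a-b)^2 - (s*c+d)^2 ≠ 0 := by
      intro h
      have hmul : (a - b + (s*c + d)) * (a - b - (s*c + d)) = 0 := by linear_combination h
      rcases mul_eq_zero.mp hmul with h'|h'
      · exact hγa h'
      · exact hγb h'
    -- the key algebraic identity
    have base : (a+b+s*c-d) * (a+b-s*c+d) * ((a-b)^2-(s*c+d)^2)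
        = (a^2+b^2-c^2-d^2)^2 - 4*a^2*b^2 - 4*c^2*d^2 - 8*s*(a*b*c*d) := by
      linear_combination (c^2*((s^2-1)*c^2 - 2*(a^2+b^2-c^2-d^2)) - 4*c^2*d^2) * hs2
    set M : ℤ := ((n₁:ℤ)+n₂-n₃-n₄)^2 - 4*n₁*n₂ - 4*n₃*n₄ with hMdef
    have key : (a+b+s*c-d) * (a+b-s*c+d) * ((a-b)^2-(s*c+d)^2)
        = (M:ℝ) - 8*s*(a*b*c*d) := by
      rw [base, ha2, hb2, hc2, hd2, hMdef]
      push_cast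
      ring
    have hR2 : (a*b*c*d)^2 = (n₁:ℝ)*n₂*n₃*n₄ := by
      have : (a*b*c*d)^2 = a^2*b^2*c^2*d^2 := by ring
      rw [this, ha2, hb2, hc2, hd2]
    have hAB0 : (a+b+s*c-d) * (a+b-s*c+d) * ((a-b)^2-(s*c+d)^2) ≠ 0 :=
      mul_ne_zero (mul_ne_zero hα hβ) hγ0
    -- bounds on the conjugate factors
    have hsc1 : -c ≤ s*c := by
      have := mul_le_mul_of_nonneg_right hsge hc0
      linarith
    have hsc2 : s*c ≤ c := by
      have := mul_le_mul_of_nonneg_right hsle hc0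
      linarith
    have hβle : |a+b-s*c+d| ≤ 4*e := by
      rw [abs_le]
      constructor
      · linarith
      · linarith
    have hγle : |(a-b)^2-(s*c+d)^2| ≤ 4*e^2 := by
      have hscd : s*(c*d) ≤ c*d := by
        have := mul_le_mul_of_nonneg_right hsle (by positivity : (0:ℝ) ≤ c*d)
        linarith
      have hab2 : (a-b)^2 ≤ e^2 := sq_sub_le_sq a b e ha0 hb0 hae hbe
      have hcd2 : (s*c+d)^2 ≤ 4*e^2 := sc_add_sq_le s c d e hs2 hsle hc0 hd0 hce hde
      rw [abs_le]
      constructor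
      · linarith [sq_nonneg (a-b)]
      · linarith [sq_nonneg (s*c+d)]
    have hABle : |(a+b+s*c-d) * (a+b-s*c+d) * ((a-b)^2-(s*c+d)^2)|
        ≤ |a+b+s*c-d| * (16*e^3) := by
      rw [abs_mul, abs_mul]
      calc |a+b+s*c-d| * |a+b-s*c+d| * |(a-b)^2-(s*c+d)^2|
          ≤ |a+b+s*c-d| * (4*e) * (4*e^2) := by
            apply mul_le_mul (mul_le_mul_of_nonneg_left hβle (abs_nonneg _)) hγle (abs_nonneg _)
            positivity
        _ = |a+b+s*c-d| * (16*e^3) := by ring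
    have h8s : |8*s*(a*b*c*d)| = 8*(a*b*c*d) := by
      rw [show (8:ℝ)*s*(a*b*c*d) = (8*(a*b*c*d))*s from by ring, abs_mul, hsabs,
        abs_of_pos (by linarith : (0:ℝ) < 8*(a*b*c*d))]
      ring
    set P : ℤ := M^2 - 64*(n₁*n₂*n₃*n₄) with hPdef
    have hPR : (P:ℝ) = ((a+b+s*c-d) * (a+b-s*c+d) * ((a-b)^2-(s*c+d)^2))
        * ((a+b+s*c-d) * (a+b-s*c+d) * ((a-b)^2-(s*c+d)^2) + 16*s*(a*b*c*d)) := by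
      rw [key, hPdef]
      push_cast
      linear_combination (64*(a*b*c*d)^2)*hs2 + 64*hR2
    by_cases hP0 : P = 0
    · -- then αβγ = -16sR, so |αβγ| = 16R
      have hz : ((a+b+s*c-d) * (a+b-s*c+d) * ((a-b)^2-(s*c+d)^2)
          + 16*s*(a*b*c*d)) = 0 := by
        have h0 : ((a+b+s*c-d) * (a+b-s*c+d) * ((a-b)^2-(s*c+d)^2))
            * ((a+b+s*c-d) * (a+b-s*c+d) * ((a-b)^2-(s*c+d)^2) + 16*s*(a*b*c*d)) = 0 := by
          rw [← hPR, hP0]; norm_num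
        exact (mul_eq_zero.mp h0).resolve_left hAB0
      have habsAB : |(a+b+s*c-d) * (a+b-s*c+d) * ((a-b)^2-(s*c+d)^2)| = 16*(a*b*c*d) := by
        have hval : (a+b+s*c-d) * (a+b-s*c+d) * ((a-b)^2-(s*c+d)^2)
            = -(2*(8*s*(a*b*c*d))) := by linarith [hz]
        rw [hval, abs_neg, show (2:ℝ)*(8*s*(a*b*c*d)) = 2*(8*s*(a*b*c*d)) from rfl, abs_mul, abs_two, h8s]
        ring
      -- |α| * 16e³ ≥ 16R  ⟹  goal
      have h16 : 16*(a*b*c*d) ≤ |a+b+s*c-d| * (16*e^3) := by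
        rw [← habsAB]; exact hABle
      linarith [mul_nonneg (by linarith : (0:ℝ) ≤ |a+b+s*c-d| * (16*e^3) - 16*(a*b*c*d))
          (by linarith : (0:ℝ) ≤ a*b*c*d),
        mul_nonneg (by linarith : (0:ℝ) ≤ a*b*c*d - 1) (by linarith : (0:ℝ) ≤ a*b*c*d)]
    · -- |P| ≥ 1
      have hP1 : (1:ℝ) ≤ |(P:ℝ)| := by
        exact_mod_cast Int.one_le_abs hP0
      have hP1' : 1 ≤ |(a+b+s*c-d) * (a+b-s*c+d) * ((a-b)^2-(s*c+d)^2)|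
          * |(a+b+s*c-d) * (a+b-s*c+d) * ((a-b)^2-(s*c+d)^2) + 16*s*(a*b*c*d)| := by
        rw [← abs_mul, ← hPR]; exact hP1
      have hAB2 : (a+b+s*c-d) * (a+b-s*c+d) * ((a-b)^2-(s*c+d)^2) + 16*s*(a*b*c*d)
          = (M:ℝ) + 8*s*(a*b*c*d) := by rw [key]; ring
      by_cases hm : |(M:ℝ)| ≤ 16*(a*b*c*d)
      · have h24 : |(a+b+s*c-d) * (a+b-s*c+d) * ((a-b)^2-(s*c+d)^2) + 16*s*(a*b*c*d)|
            ≤ 24*(a*b*c*d) := by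
          rw [hAB2]
          calc |(M:ℝ) + 8*s*(a*b*c*d)| ≤ |(M:ℝ)| + |8*s*(a*b*c*d)| := abs_add_le _ _
            _ ≤ 24*(a*b*c*d) := by rw [h8s]; linarith
        have h1AB : 1 ≤ |(a+b+s*c-d) * (a+b-s*c+d) * ((a-b)^2-(s*c+d)^2)| * (24*(a*b*c*d)) :=
          le_trans hP1' (mul_le_mul_of_nonneg_left h24 (abs_nonneg _))
        linarith [h1AB, mul_le_mul_of_nonneg_right hABle (by linarith : (0:ℝ) ≤ 24*(a*b*c*d))]
      · push_neg at hm
        have hlow : 8*(a*b*c*d) ≤ |(a+b+s*c-d) * (a+b-s*c+d) * ((a-b)^2-(s*c+d)^2)| := by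
          have htri := abs_sub_abs_le_abs_sub ((M:ℝ)) (8*s*(a*b*c*d))
          rw [h8s] at htri
          have : |(a+b+s*c-d) * (a+b-s*c+d) * ((a-b)^2-(s*c+d)^2)|
              = |(M:ℝ) - 8*s*(a*b*c*d)| := by rw [key]
          rw [this]
          linarith
        have h8 : 8*(a*b*c*d) ≤ |a+b+s*c-d| * (16*e^3) := le_trans hlow hABle
        linarith [mul_nonneg (by linarith : (0:ℝ) ≤ |a+b+s*c-d| * (16*e^3) - 8*(a*b*c*d))
            (by linarith : (0:ℝ) ≤ a*b*c*d),
          mul_nonneg (by linarith : (0:ℝ) ≤ a*b*c*d - 1) (by linarith : (0:ℝ) ≤ a*b*c*d)]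

theorem stmt18 :
    ∃ c : ℝ, 0 < c ∧ ∀ (n₁ n₂ n₃ n₄ : ℕ), 0 < n₁ → 0 < n₂ → 0 < n₃ → 0 < n₄ →
      ∀ s : ℝ, (s = 1 ∨ s = -1) →
      Real.sqrt n₁ + Real.sqrt n₂ + s * Real.sqrt n₃ - Real.sqrt n₄ ≠ 0 →
      c * ((max (max n₁ n₂) (max n₃ n₄) : ℝ) ^ (-(3 : ℝ) / 2) *
          ((n₁ : ℝ) * n₂ * n₃ * n₄) ^ (-(1 : ℝ) / 2)) ≤
        |Real.sqrt n₁ + Real.sqrt n₂ + s * Real.sqrt n₃ - Real.sqrt n₄| := by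
  refine ⟨1/384, by norm_num, ?_⟩
  intro n₁ n₂ n₃ n₄ h1 h2 h3 h4 s hs hα
  have hNR : (max (max (n₁:ℝ) (n₂:ℝ)) (max (n₃:ℝ) (n₄:ℝ)))
      = ((max (max n₁ n₂) (max n₃ n₄) : ℕ) : ℝ) := by
    simp only [Nat.cast_max]
  rw [hNR]
  set N : ℕ := max (max n₁ n₂) (max n₃ n₄) with hN
  have key1 : ((N:ℝ)) ^ (-(3:ℝ)/2) = ((Real.sqrt N)^3)⁻¹ := by
    rw [show (-(3:ℝ)/2) = -(3/2) by ring, Real.rpow_neg (by positivity),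
      show ((3:ℝ)/2) = (1/2)*(3:ℕ) by norm_num, Real.rpow_mul (by positivity),
      Real.rpow_natCast, ← Real.sqrt_eq_rpow]
  have key2 : ((n₁:ℝ)*n₂*n₃*n₄) ^ (-(1:ℝ)/2)
      = (Real.sqrt n₁ * Real.sqrt n₂ * Real.sqrt n₃ * Real.sqrt n₄)⁻¹ := by
    rw [show (-(1:ℝ)/2) = -(1/2) by ring, Real.rpow_neg (by positivity),
      ← Real.sqrt_eq_rpow, Real.sqrt_mul (by positivity), Real.sqrt_mul (by positivity),
      Real.sqrt_mul (by positivity)]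
  rw [key1, key2]
  have hm := master n₁ n₂ n₃ n₄ N h1 h2 h3 h4
    (le_trans (le_max_left n₁ n₂) (le_max_left _ _))
    (le_trans (le_max_right n₁ n₂) (le_max_left _ _))
    (le_trans (le_max_left n₃ n₄) (le_max_right _ _))
    (le_trans (le_max_right n₃ n₄) (le_max_right _ _))
    (Real.sqrt n₁) (Real.sqrt n₂) (Real.sqrt n₃) (Real.sqrt n₄) (Real.sqrt N) s
    (Real.sq_sqrt (by positivity)) (Real.sq_sqrt (by positivity))
    (Real.sq_sqrt (by positivity)) (Real.sq_sqrt (by positivity))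
    (Real.sq_sqrt (by positivity))
    (Real.sqrt_nonneg _) (Real.sqrt_nonneg _) (Real.sqrt_nonneg _) (Real.sqrt_nonneg _)
    (Real.sqrt_nonneg _) hs hα
  calc 1/384 * (((Real.sqrt N)^3)⁻¹ * (Real.sqrt n₁ * Real.sqrt n₂ * Real.sqrt n₃ * Real.sqrt n₄)⁻¹)
      = 1/384 * (1/((Real.sqrt N)^3 * (Real.sqrt n₁ * Real.sqrt n₂ * Real.sqrt n₃ * Real.sqrt n₄))) := by
        ring
    _ ≤ _ := hm
end

section
/- Let f_1, ..., f_k, g : [a,b] → ℝ where each f_j is continuous and monotonic with |f_j(t)| ≤ A_j on [a,b], and g has a continuous monotonic derivative with |g'(t)| ≥ Δ > 0 on [a,b]. Then |∫_a^b f_1(t)···f_k(t) e^{2πi g(t)} dt| ≤ C_k · A_1···A_k / Δ for a constant C_k depending only on k. -/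
open Real Set MeasureTheory

/-- Clamp to `[a,b]`. -/
noncomputable def clampF (a b : ℝ) (t : ℝ) : ℝ := max a (min t b)

lemma clampF_mem {a b : ℝ} (hab : a ≤ b) (t : ℝ) : clampF a b t ∈ Icc a b := by
  constructor
  · exact le_max_left _ _
  · exact max_le hab (min_le_right _ _)

lemma clampF_mono (a b : ℝ) : Monotone (clampF a b) := fun x y hxy => by
  exact max_le_max le_rfl (min_le_min hxy le_rfl)

lemma clampF_cont (a b : ℝ) : Continuous (clampF a b) :=
  continuous_const.max ((continuous_id.min continuous_const))

lemma clampF_eq {a b t : ℝ} (ht : t ∈ Icc a b) : clampF a b t = t := by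
  unfold clampF
  rw [min_eq_left ht.2, max_eq_right ht.1]

/-- Core second-mean-value style bound, globally defined functions. -/
lemma core_bound (a b : ℝ) (hab : a ≤ b) (h : ℝ → ℝ) (φ : ℝ → ℂ) (B M : ℝ)
    (hh : Monotone h) (hhc : Continuous h) (hφc : Continuous φ)
    (hB : ∀ t, ‖φ t‖ ≤ B)
    (hM : ∀ x ∈ Icc a b, ‖∫ t in a..x, φ t‖ ≤ M) :
    ‖∫ t in a..b, h t • φ t‖ ≤ (|h a| + 2 * (h b - h a)) * M := by
  have hM0 : 0 ≤ M := le_trans (by simp) (hM a ⟨le_rfl, hab⟩)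
  set T : Set ℝ := Ioc a b with hT
  set Y : Set ℝ := Ioc (h a) (h b) with hY
  set s : Set (ℝ × ℝ) := {q : ℝ × ℝ | q.2 ≤ h q.1} with hsdef
  have hs : IsClosed s := isClosed_le continuous_snd (hhc.comp continuous_fst)
  set F : ℝ × ℝ → ℂ := s.indicator (fun q => φ q.1) with hFdef
  -- step 1 : split
  have hint1 : IntervalIntegrable (fun t => h a • φ t) volume a b :=
    (hφc.const_smul (h a)).intervalIntegrable a b
  have hint2 : IntervalIntegrable (fun t => (h t - h a) • φ t) volume a b :=
    (((hhc.sub continuous_const).smul hφc)).intervalIntegrable a b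
  have split : ∫ t in a..b, h t • φ t
      = h a • (∫ t in a..b, φ t) + ∫ t in T, (h t - h a) • φ t := by
    have : ∫ t in a..b, h t • φ t
        = (∫ t in a..b, h a • φ t) + ∫ t in a..b, (h t - h a) • φ t := by
      rw [← intervalIntegral.integral_add hint1 hint2]
      apply intervalIntegral.integral_congr
      intro t _
      simp [sub_smul]
    rw [this, intervalIntegral.integral_smul, intervalIntegral.integral_of_le hab,
      intervalIntegral.integral_of_le hab]
  -- step 2 : layer cake for the second piece
  have layer : ∀ t ∈ T, (h t - h a) • φ t = ∫ y in Y, F (t, y) := by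
    intro t ht
    have hat : h a ≤ h t := hh (le_of_lt ht.1)
    have htb : h t ≤ h b := hh ht.2
    have e1 : ∀ y : ℝ, F (t, y) = (Iic (h t)).indicator (fun _ => φ t) y := by
      intro y
      by_cases hy : y ≤ h t
      · simp [hFdef, hsdef, Set.indicator_of_mem, hy, Set.mem_setOf_eq]
      · simp [hFdef, hsdef, Set.indicator_of_notMem, hy, Set.mem_setOf_eq]
    symm
    calc ∫ y in Y, F (t, y) = ∫ y in Y, (Iic (h t)).indicator (fun _ => φ t) y := by
          simp only [e1]
      _ = ∫ _y in Y ∩ Iic (h t), φ t := setIntegral_indicator measurableSet_Iic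
      _ = (volume (Y ∩ Iic (h t))).toReal • φ t := by rw [setIntegral_const]; rfl
      _ = (h t - h a) • φ t := by
          rw [hY, Set.Ioc_inter_Iic, min_eq_right htb, Real.volume_Ioc,
            ENNReal.toReal_ofReal (by linarith)]
  -- integrability of F on the product
  have hTfin : volume T < ⊤ := by rw [hT, Real.volume_Ioc]; exact ENNReal.ofReal_lt_top
  have hYfin : volume Y < ⊤ := by rw [hY, Real.volume_Ioc]; exact ENNReal.ofReal_lt_top
  haveI : IsFiniteMeasure (volume.restrict T) :=
    ⟨by rwa [Measure.restrict_apply_univ]⟩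
  haveI : IsFiniteMeasure (volume.restrict Y) :=
    ⟨by rwa [Measure.restrict_apply_univ]⟩
  have hFmeas : AEStronglyMeasurable F ((volume.restrict T).prod (volume.restrict Y)) :=
    ((hφc.comp continuous_fst).aestronglyMeasurable).indicator hs.measurableSet
  have hFint : Integrable F ((volume.restrict T).prod (volume.restrict Y)) := by
    refine Integrable.mono' (integrable_const B) hFmeas ?_
    filter_upwards with q
    by_cases hq : q ∈ s
    · rw [hFdef, Set.indicator_of_mem hq]; exact hB _
    · rw [hFdef, Set.indicator_of_notMem hq]; simp [hM0]
      calc (0:ℝ) ≤ ‖φ q.1‖ := norm_nonneg _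
        _ ≤ B := hB _
  -- Fubini
  have swap : ∫ t in T, ∫ y in Y, F (t, y) = ∫ y in Y, ∫ t in T, F (t, y) :=
    integral_integral_swap (f := fun t y => F (t, y)) hFint
  -- step 5 : inner integral bound
  have inner_bound : ∀ y ∈ Y, ‖∫ t in T, F (t, y)‖ ≤ 2 * M := by
    intro y hy
    set S : Set ℝ := {t : ℝ | y ≤ h t} with hSdef
    have hSclosed : IsClosed S := isClosed_le continuous_const hhc
    have hbS : b ∈ S := hy.2
    have hSsub : S ⊆ Ioi a := by
      intro t ht
      have hyt : y ≤ h t := ht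
      by_contra hta
      simp only [mem_Ioi, not_lt] at hta
      have : h t ≤ h a := hh hta
      have : y ≤ h a := le_trans hyt this
      linarith [hy.1]
    have hbdd : BddBelow S := ⟨a, fun t ht => le_of_lt (hSsub ht)⟩
    set c : ℝ := sInf S with hc
    have hcS : c ∈ S := hSclosed.csInf_mem ⟨b, hbS⟩ hbdd
    have hca : a < c := hSsub hcS
    have hcb : c ≤ b := csInf_le hbdd hbS
    have hTS : T ∩ S = Icc c b := by
      ext t
      constructor
      · rintro ⟨htT, htS⟩
        exact ⟨csInf_le hbdd htS, htT.2⟩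
      · rintro ⟨h1, h2⟩
        refine ⟨⟨lt_of_lt_of_le hca h1, h2⟩, ?_⟩
        exact le_trans hcS (hh h1)
    have e2 : (fun t => F (t, y)) = S.indicator φ := by
      funext t
      by_cases ht : y ≤ h t
      · simp [hFdef, hsdef, hSdef, Set.indicator_of_mem, ht, Set.mem_setOf_eq]
      · simp [hFdef, hsdef, hSdef, Set.indicator_of_notMem, ht, Set.mem_setOf_eq]
    have hφi : ∀ u v : ℝ, IntervalIntegrable φ volume u v := fun u v =>
      hφc.intervalIntegrable u v
    have e3 : ∫ t in T, F (t, y) = (∫ t in a..b, φ t) - ∫ t in a..c, φ t := by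
      rw [e2, setIntegral_indicator hSclosed.measurableSet, hTS,
        integral_Icc_eq_integral_Ioc, ← intervalIntegral.integral_of_le hcb,
        intervalIntegral.integral_interval_sub_left (hφi a b) (hφi a c)]
    rw [e3]
    calc ‖(∫ t in a..b, φ t) - ∫ t in a..c, φ t‖
        ≤ ‖∫ t in a..b, φ t‖ + ‖∫ t in a..c, φ t‖ := norm_sub_le _ _
      _ ≤ M + M := add_le_add (hM b ⟨hab, le_rfl⟩) (hM c ⟨hca.le, hcb⟩)
      _ = 2 * M := by ring
  -- assemble
  have hab' : h a ≤ h b := hh hab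
  have J_bound : ‖∫ t in T, (h t - h a) • φ t‖ ≤ 2 * M * (h b - h a) := by
    have e4 : ∫ t in T, (h t - h a) • φ t = ∫ y in Y, ∫ t in T, F (t, y) := by
      rw [← swap]
      exact setIntegral_congr_fun measurableSet_Ioc layer
    rw [e4]
    have hmeas : AEStronglyMeasurable (fun y => ∫ t in T, F (t, y)) (volume.restrict Y) :=
      (hFint.integral_prod_right).aestronglyMeasurable
    have := norm_setIntegral_le_of_norm_le_const (μ := volume) (s := Y)
      (f := fun y => ∫ t in T, F (t, y)) hYfin inner_bound
    calc ‖∫ y in Y, ∫ t in T, F (t, y)‖ ≤ 2 * M * (volume Y).toReal := this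
      _ = 2 * M * (h b - h a) := by
          rw [hY, Real.volume_Ioc, ENNReal.toReal_ofReal (by linarith)]
  calc ‖∫ t in a..b, h t • φ t‖
      = ‖h a • (∫ t in a..b, φ t) + ∫ t in T, (h t - h a) • φ t‖ := by rw [split]
    _ ≤ ‖h a • (∫ t in a..b, φ t)‖ + ‖∫ t in T, (h t - h a) • φ t‖ := norm_add_le _ _
    _ ≤ |h a| * M + 2 * M * (h b - h a) := by
        apply add_le_add _ J_bound
        rw [norm_smul, Real.norm_eq_abs]
        exact mul_le_mul_of_nonneg_left (hM b ⟨hab, le_rfl⟩) (abs_nonneg _)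
    _ ≤ (|h a| + 2 * (h b - h a)) * M := by nlinarith [abs_nonneg (h a)]

/-- Monotone-case wrapper with clamping. -/
lemma key5m (a b : ℝ) (hab : a ≤ b) (h : ℝ → ℝ) (φ : ℝ → ℂ) (A M : ℝ)
    (hmono : MonotoneOn h (Icc a b))
    (hc : ContinuousOn h (Icc a b))
    (hA : ∀ t ∈ Icc a b, |h t| ≤ A)
    (hφ : ContinuousOn φ (Icc a b))
    (hM : ∀ x ∈ Icc a b, ‖∫ t in a..x, φ t‖ ≤ M) :
    ‖∫ t in a..b, h t • φ t‖ ≤ 5 * A * M := by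
  have hM0 : 0 ≤ M := le_trans (by simp) (hM a ⟨le_rfl, hab⟩)
  set h' : ℝ → ℝ := h ∘ clampF a b with hh'
  set φ' : ℝ → ℂ := φ ∘ clampF a b with hφ'
  have hh'm : Monotone h' := fun x y hxy =>
    hmono (clampF_mem hab x) (clampF_mem hab y) (clampF_mono a b hxy)
  have hh'c : Continuous h' := hc.comp_continuous (clampF_cont a b) (clampF_mem hab)
  have hφ'c : Continuous φ' := hφ.comp_continuous (clampF_cont a b) (clampF_mem hab)
  obtain ⟨B, hB⟩ := isCompact_Icc.exists_bound_of_continuousOn hφ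
  have hB' : ∀ t, ‖φ' t‖ ≤ B := fun t => hB _ (clampF_mem hab t)
  have heq : ∀ t ∈ Icc a b, h' t = h t ∧ φ' t = φ t := by
    intro t ht
    constructor <;> simp [hh', hφ', Function.comp, clampF_eq ht]
  have hM' : ∀ x ∈ Icc a b, ‖∫ t in a..x, φ' t‖ ≤ M := by
    intro x hx
    have : ∫ t in a..x, φ' t = ∫ t in a..x, φ t := by
      apply intervalIntegral.integral_congr
      intro t ht
      have htm : t ∈ Icc a b :=
        (Set.uIcc_subset_Icc ⟨le_rfl, hab⟩ hx) ht
      exact (heq t htm).2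
    rw [this]; exact hM x hx
  have hEa : a ∈ Icc a b := ⟨le_rfl, hab⟩
  have hEb : b ∈ Icc a b := ⟨hab, le_rfl⟩
  have main := core_bound a b hab h' φ' B M hh'm hh'c hφ'c hB' hM'
  have hieq : ∫ t in a..b, h' t • φ' t = ∫ t in a..b, h t • φ t := by
    apply intervalIntegral.integral_congr
    intro t ht
    have htm : t ∈ Icc a b := (Set.uIcc_subset_Icc hEa hEb) ht
    show h' t • φ' t = h t • φ t
    rw [(heq t htm).1, (heq t htm).2]
  rw [hieq] at main
  refine le_trans main ?_
  have e1 : h' a = h a := (heq a hEa).1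
  have e2 : h' b = h b := (heq b hEb).1
  rw [e1, e2]
  have h1 : |h a| ≤ A := hA a hEa
  have h2 : |h b| ≤ A := hA b hEb
  have h3 : h b - h a ≤ 2 * A := by
    have := abs_le.mp h1
    have := abs_le.mp h2
    linarith
  nlinarith [abs_nonneg (h a)]

/-- Second mean value bound for monotone or antitone amplitudes. -/
lemma key5 (a b : ℝ) (hab : a ≤ b) (h : ℝ → ℝ) (φ : ℝ → ℂ) (A M : ℝ)
    (hmono : MonotoneOn h (Icc a b) ∨ AntitoneOn h (Icc a b))
    (hc : ContinuousOn h (Icc a b))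
    (hA : ∀ t ∈ Icc a b, |h t| ≤ A)
    (hφ : ContinuousOn φ (Icc a b))
    (hM : ∀ x ∈ Icc a b, ‖∫ t in a..x, φ t‖ ≤ M) :
    ‖∫ t in a..b, h t • φ t‖ ≤ 5 * A * M := by
  rcases hmono with hm | hm
  · exact key5m a b hab h φ A M hm hc hA hφ hM
  · have neg : ∫ t in a..b, h t • φ t = -∫ t in a..b, (-h t) • φ t := by
      rw [← intervalIntegral.integral_neg]
      apply intervalIntegral.integral_congr
      intro t _
      simp
    rw [neg, norm_neg]
    exact key5m a b hab (fun t => -h t) φ A M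
      (fun x hx y hy hxy => neg_le_neg (hm hx hy hxy))
      (hc.neg) (fun t ht => by rw [abs_neg]; exact hA t ht) hφ hM

/-- Base case: the first derivative test without amplitudes. -/
lemma base_case (a b : ℝ) (hab : a ≤ b) (g g' : ℝ → ℝ) (Δ : ℝ) (hΔ : 0 < Δ)
    (hg : ∀ t ∈ Icc a b, HasDerivAt g (g' t) t)
    (hg'c : ContinuousOn g' (Icc a b))
    (hg'm : MonotoneOn g' (Icc a b) ∨ AntitoneOn g' (Icc a b))
    (hΔg : ∀ t ∈ Icc a b, Δ ≤ |g' t|) :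
    ‖∫ t in a..b, Complex.exp (2 * π * Complex.I * (g t : ℂ))‖ ≤ 2 / Δ := by
  have hne : ∀ t ∈ Icc a b, g' t ≠ 0 := by
    intro t ht h0
    have := hΔg t ht
    rw [h0, abs_zero] at this
    linarith
  have hEa : a ∈ Icc a b := ⟨le_rfl, hab⟩
  have hEb : b ∈ Icc a b := ⟨hab, le_rfl⟩
  -- constant sign of g'
  have hsign : (∀ t ∈ Icc a b, 0 < g' t) ∨ (∀ t ∈ Icc a b, g' t < 0) := by
    rcases lt_or_gt_of_ne (hne a hEa) with hA | hA
    · right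
      intro t ht
      by_contra hpos
      push_neg at hpos
      have hpos' : 0 < g' t := lt_of_le_of_ne hpos (Ne.symm (hne t ht))
      have hsub : uIcc a t ⊆ Icc a b := Set.uIcc_subset_Icc hEa ht
      have h0mem : (0:ℝ) ∈ uIcc (g' a) (g' t) := by
        rw [Set.mem_uIcc]; left; exact ⟨hA.le, hpos'.le⟩
      obtain ⟨c, hc, hc0⟩ := intermediate_value_uIcc (hg'c.mono hsub) h0mem
      exact hne c (hsub hc) hc0
    · left
      intro t ht
      by_contra hneg
      push_neg at hneg
      have hneg' : g' t < 0 := lt_of_le_of_ne hneg (hne t ht)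
      have hsub : uIcc a t ⊆ Icc a b := Set.uIcc_subset_Icc hEa ht
      have h0mem : (0:ℝ) ∈ uIcc (g' a) (g' t) := by
        rw [Set.mem_uIcc]; right; exact ⟨hneg'.le, hA.le⟩
      obtain ⟨c, hc, hc0⟩ := intermediate_value_uIcc (hg'c.mono hsub) h0mem
      exact hne c (hsub hc) hc0
  set h : ℝ → ℝ := fun t => 1 / (2 * π * g' t) with hhdef
  have hden : ∀ t ∈ Icc a b, 2 * π * g' t ≠ 0 := by
    intro t ht
    have := hne t ht
    positivity
  have hcont : ContinuousOn h (Icc a b) := by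
    apply ContinuousOn.div continuousOn_const (continuousOn_const.mul hg'c) hden
  have hAh : ∀ t ∈ Icc a b, |h t| ≤ 1 / (2 * π * Δ) := by
    intro t ht
    have hgt : Δ ≤ |g' t| := hΔg t ht
    have habs : |h t| = 1 / (2 * π * |g' t|) := by
      rw [hhdef]
      rw [abs_div, abs_one, abs_mul, abs_mul]
      simp [abs_two, abs_of_pos Real.pi_pos]
    rw [habs]
    apply one_div_le_one_div_of_le (by positivity)
    nlinarith [Real.pi_pos]
  have hmono : MonotoneOn h (Icc a b) ∨ AntitoneOn h (Icc a b) := by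
    rcases hsign with hs | hs <;> rcases hg'm with hm | hm
    · right
      intro x hx y hy hxy
      exact one_div_le_one_div_of_le (by have := hs x hx; nlinarith [Real.pi_pos])
        (by have := hm hx hy hxy; nlinarith [Real.pi_pos])
    · left
      intro x hx y hy hxy
      exact one_div_le_one_div_of_le (by have := hs y hy; nlinarith [Real.pi_pos])
        (by have := hm hx hy hxy; nlinarith [Real.pi_pos])
    · right
      intro x hx y hy hxy
      exact one_div_le_one_div_of_neg_of_le (by have := hs y hy; nlinarith [Real.pi_pos])
        (by have := hm hx hy hxy; nlinarith [Real.pi_pos])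
    · left
      intro x hx y hy hxy
      exact one_div_le_one_div_of_neg_of_le (by have := hs x hx; nlinarith [Real.pi_pos])
        (by have := hm hx hy hxy; nlinarith [Real.pi_pos])
  set E : ℝ → ℂ := fun t => Complex.exp (2 * π * Complex.I * (g t : ℂ)) with hEdef
  set ψ : ℝ → ℂ := fun t => (-Complex.I) * ((2 * π * Complex.I * (g' t : ℂ)) * E t) with hψdef
  have hgc : ContinuousOn g (Icc a b) := fun t ht =>
    (hg t ht).continuousAt.continuousWithinAt
  have hEc : ContinuousOn E (Icc a b) := by
    apply Complex.continuous_exp.comp_continuousOn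
    exact continuousOn_const.mul (Complex.continuous_ofReal.comp_continuousOn hgc)
  have hEnorm : ∀ t, ‖E t‖ = 1 := by
    intro t
    rw [hEdef]
    simp only [Complex.norm_exp]
    have : (2 * ↑π * Complex.I * (g t : ℂ)).re = 0 := by
      simp [Complex.mul_re, Complex.mul_im]
    rw [this, Real.exp_zero]
  have hψc : ContinuousOn ψ (Icc a b) := by
    apply continuousOn_const.mul
    exact (continuousOn_const.mul (Complex.continuous_ofReal.comp_continuousOn hg'c)).mul hEc
  have hderiv : ∀ x ∈ Icc a b, ∀ t ∈ uIcc a x,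
      HasDerivAt E ((2 * π * Complex.I * (g' t : ℂ)) * E t) t := by
    intro x hx t ht
    have htm : t ∈ Icc a b := Set.uIcc_subset_Icc hEa hx ht
    have d1 : HasDerivAt (fun y => (2 * (π:ℂ) * Complex.I) * ((g y : ℝ) : ℂ))
        ((2 * (π:ℂ) * Complex.I) * ((g' t : ℝ) : ℂ)) t :=
      ((hg t htm).ofReal_comp).const_mul _
    have := d1.cexp
    convert this using 1
    ring
  have hFTC : ∀ x ∈ Icc a b, ∫ t in a..x, ψ t = (-Complex.I) * (E x - E a) := by
    intro x hx
    have hint : IntervalIntegrable (fun t => (2 * π * Complex.I * (g' t : ℂ)) * E t)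
        volume a x := by
      apply ContinuousOn.intervalIntegrable
      apply ContinuousOn.mono _ (Set.uIcc_subset_Icc hEa hx)
      exact (continuousOn_const.mul (Complex.continuous_ofReal.comp_continuousOn hg'c)).mul hEc
    rw [hψdef]
    simp only
    rw [intervalIntegral.integral_const_mul]
    congr 1
    exact intervalIntegral.integral_eq_sub_of_hasDerivAt (hderiv x hx) hint
  have hM : ∀ x ∈ Icc a b, ‖∫ t in a..x, ψ t‖ ≤ 2 := by
    intro x hx
    rw [hFTC x hx, norm_mul, norm_neg, Complex.norm_I, one_mul]
    calc ‖E x - E a‖ ≤ ‖E x‖ + ‖E a‖ := norm_sub_le _ _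
      _ = 2 := by rw [hEnorm, hEnorm]; norm_num
  have hpt : ∀ t ∈ Icc a b, h t • ψ t = E t := by
    intro t ht
    have hg't : (g' t : ℂ) ≠ 0 := Complex.ofReal_ne_zero.mpr (hne t ht)
    have hπ : (π : ℂ) ≠ 0 := Complex.ofReal_ne_zero.mpr Real.pi_ne_zero
    rw [hhdef, hψdef, Complex.real_smul]
    push_cast
    field_simp
    ring_nf
    rw [Complex.I_sq]
    ring
  have hmain := key5 a b hab h ψ (1 / (2 * π * Δ)) 2 hmono hcont hAh hψc hM
  have hieq : ∫ t in a..b, h t • ψ t = ∫ t in a..b, E t := by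
    apply intervalIntegral.integral_congr
    intro t ht
    exact hpt t (Set.uIcc_subset_Icc hEa hEb ht)
  rw [hieq] at hmain
  refine le_trans hmain ?_
  have hπ := Real.pi_gt_three
  have h2 : 5 * (1 / (2 * π * Δ)) * 2 = 5 / (π * Δ) := by
    field_simp
  rw [h2, div_le_div_iff₀ (by positivity) hΔ]
  nlinarith

/-- Main induction. -/
lemma mainAux (k : ℕ) :
    ∀ (a b : ℝ), a ≤ b → ∀ (f : Fin k → ℝ → ℝ) (g g' : ℝ → ℝ) (A : Fin k → ℝ) (Δ : ℝ),
      0 < Δ →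
      (∀ j, ContinuousOn (f j) (Set.Icc a b)) →
      (∀ j, MonotoneOn (f j) (Set.Icc a b) ∨ AntitoneOn (f j) (Set.Icc a b)) →
      (∀ j, ∀ t ∈ Set.Icc a b, |f j t| ≤ A j) →
      (∀ t ∈ Set.Icc a b, HasDerivAt g (g' t) t) →
      ContinuousOn g' (Set.Icc a b) →
      (MonotoneOn g' (Set.Icc a b) ∨ AntitoneOn g' (Set.Icc a b)) →
      (∀ t ∈ Set.Icc a b, Δ ≤ |g' t|) →
      ‖∫ t in a..b, ((∏ j, f j t : ℝ) : ℂ) *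
          Complex.exp (2 * Real.pi * Complex.I * (g t : ℂ))‖ ≤
        2 * 5 ^ k * (∏ j, A j) / Δ := by
  induction k with
  | zero =>
    intro a b hab f g g' A Δ hΔ _ _ _ hg hg'c hg'm hΔg
    have := base_case a b hab g g' Δ hΔ hg hg'c hg'm hΔg
    simpa using this
  | succ k ih =>
    intro a b hab f g g' A Δ hΔ hfc hfm hfA hg hg'c hg'm hΔg
    have hEa : a ∈ Icc a b := ⟨le_rfl, hab⟩
    have hEb : b ∈ Icc a b := ⟨hab, le_rfl⟩
    set E : ℝ → ℂ := fun t => Complex.exp (2 * π * Complex.I * (g t : ℂ)) with hEdef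
    set φ : ℝ → ℂ := fun t => ((∏ j : Fin k, f j.castSucc t : ℝ) : ℂ) * E t with hφdef
    set hh : ℝ → ℝ := f (Fin.last k) with hhdef
    have h1 : ∀ t, ((∏ j : Fin (k+1), f j t : ℝ) : ℂ) * E t = hh t • φ t := by
      intro t
      simp only [hφdef, hhdef, Fin.prod_univ_castSucc, Complex.real_smul]
      push_cast
      ring
    have hgc : ContinuousOn g (Icc a b) := fun t ht =>
      (hg t ht).continuousAt.continuousWithinAt
    have hEc : ContinuousOn E (Icc a b) := by
      apply Complex.continuous_exp.comp_continuousOn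
      exact continuousOn_const.mul (Complex.continuous_ofReal.comp_continuousOn hgc)
    have hφc : ContinuousOn φ (Icc a b) := by
      apply ContinuousOn.mul _ hEc
      apply Complex.continuous_ofReal.comp_continuousOn
      exact continuousOn_finset_prod _ (fun j _ => hfc j.castSucc)
    set M : ℝ := 2 * 5 ^ k * (∏ j : Fin k, A j.castSucc) / Δ with hMdef
    have hM : ∀ x ∈ Icc a b, ‖∫ t in a..x, φ t‖ ≤ M := by
      intro x hx
      have hsub : Icc a x ⊆ Icc a b := Set.Icc_subset_Icc le_rfl hx.2
      exact ih a x hx.1 (fun j => f j.castSucc) g g' (fun j => A j.castSucc) Δ hΔ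
        (fun j => (hfc j.castSucc).mono hsub)
        (fun j => (hfm j.castSucc).imp (fun m => m.mono hsub) (fun m => m.mono hsub))
        (fun j t ht => hfA j.castSucc t (hsub ht))
        (fun t ht => hg t (hsub ht))
        (hg'c.mono hsub)
        (hg'm.imp (fun m => m.mono hsub) (fun m => m.mono hsub))
        (fun t ht => hΔg t (hsub ht))
    have hkey := key5 a b hab hh φ (A (Fin.last k)) M
      (hfm (Fin.last k)) (hfc (Fin.last k)) (hfA (Fin.last k)) hφc hM
    have hieq : ∫ t in a..b, ((∏ j, f j t : ℝ) : ℂ) *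
        Complex.exp (2 * Real.pi * Complex.I * (g t : ℂ)) = ∫ t in a..b, hh t • φ t := by
      apply intervalIntegral.integral_congr
      intro t _
      exact h1 t
    rw [hieq]
    refine le_trans hkey (le_of_eq ?_)
    rw [hMdef, Fin.prod_univ_castSucc (f := A)]
    ring

theorem stmt19 (k : ℕ) :
    ∃ C : ℝ, 0 < C ∧
      ∀ (a b : ℝ), a ≤ b → ∀ (f : Fin k → ℝ → ℝ) (g g' : ℝ → ℝ) (A : Fin k → ℝ) (Δ : ℝ),
        0 < Δ →
        (∀ j, ContinuousOn (f j) (Set.Icc a b)) →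
        (∀ j, MonotoneOn (f j) (Set.Icc a b) ∨ AntitoneOn (f j) (Set.Icc a b)) →
        (∀ j, ∀ t ∈ Set.Icc a b, |f j t| ≤ A j) →
        (∀ t ∈ Set.Icc a b, HasDerivAt g (g' t) t) →
        ContinuousOn g' (Set.Icc a b) →
        (MonotoneOn g' (Set.Icc a b) ∨ AntitoneOn g' (Set.Icc a b)) →
        (∀ t ∈ Set.Icc a b, Δ ≤ |g' t|) →
        ‖∫ t in a..b, ((∏ j, f j t : ℝ) : ℂ) *
            Complex.exp (2 * Real.pi * Complex.I * (g t : ℂ))‖ ≤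
          C * (∏ j, A j) / Δ := by
  exact ⟨2 * 5 ^ k, by positivity, mainAux k⟩
end
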